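/- Let V be a nonempty finite type with n = Fintype.card V and E : Fin m → Sym2 V a decodable multigraph on V. Let α be the number of vertices v with d_I(v) = m(G) and β the number of vertices v with d_I(v) ≥ m(G) + 2. Then α + 2m ≥ L_G + n·m(G) + n + β. -/

import Mathlib

/-- `e` is a loop index at vertex `v`. -/
def IsLoopIdx {V : Type*} {m : ℕ} (E : Fin m → Sym2 V) (v : V) (e : Fin m) : Prop :=
  E e = Sym2.diag v

/-- `u` and `v` are connected in the multigraph `E` with the edge indices in `S` deleted. -/
def ConnectedMod {V : Type*} {m : ℕ} (E : Fin m → Sym2 V) (S : Finset (Fin m))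
    (u v : V) : Prop :=
  Relation.EqvGen (fun a b => ∃ e : Fin m, e ∉ S ∧ E e = s(a, b)) u v

/-- `G − S` is decodable: every vertex is connected in `G − S` to a vertex with a loop
outside `S`. -/
def DecodableMod {V : Type*} {m : ℕ} (E : Fin m → Sym2 V) (S : Finset (Fin m)) : Prop :=
  ∀ u : V, ∃ v : V, (∃ e : Fin m, e ∉ S ∧ IsLoopIdx E v e) ∧ ConnectedMod E S u v

def IsDecodable {V : Type*} {m : ℕ} (E : Fin m → Sym2 V) : Prop :=
  DecodableMod E ∅

/-- `c_x^G`: the number of `x`-element sets of edge indices whose deletion leaves a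
decodable graph. -/
noncomputable def cG {V : Type*} {m : ℕ} (E : Fin m → Sym2 V) (x : ℕ) : ℕ :=
  Set.ncard {S : Finset (Fin m) | S.card = x ∧ DecodableMod E S}

/-- `k_x^G = C(m,x) − c_x^G`. -/
noncomputable def kG {V : Type*} {m : ℕ} (E : Fin m → Sym2 V) (x : ℕ) : ℕ :=
  Nat.choose m x - cG E x

/-- `m(G)`: the minimum cardinality of a loop cut. -/
noncomputable def mCut {V : Type*} {m : ℕ} (E : Fin m → Sym2 V) : ℕ :=
  sInf {k : ℕ | ∃ S : Finset (Fin m), S.card = k ∧ ¬ DecodableMod E S}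

/-- incidence degree of `v` (a loop at `v` counts once). -/
noncomputable def dI {V : Type*} {m : ℕ} (E : Fin m → Sym2 V) (v : V) : ℕ :=
  Set.ncard {e : Fin m | v ∈ E e}

/-- `δ_I(G)`: the minimum incidence degree. -/
noncomputable def deltaI {V : Type*} {m : ℕ} (E : Fin m → Sym2 V) : ℕ :=
  sInf (Set.range (dI E))

/-- `L_G`: the number of loop indices. -/
noncomputable def LG {V : Type*} {m : ℕ} (E : Fin m → Sym2 V) : ℕ :=
  Set.ncard {e : Fin m | ∃ v : V, E e = Sym2.diag v}

/-- `δ_ℓ(v)`: the number of loop indices at `v`. -/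
noncomputable def loopsAt {V : Type*} {m : ℕ} (E : Fin m → Sym2 V) (v : V) : ℕ :=
  Set.ncard {e : Fin m | E e = Sym2.diag v}

/-- `Δ_ℓ(G)`: the maximum number of loops at a single vertex. -/
noncomputable def DeltaLoops {V : Type*} {m : ℕ} (E : Fin m → Sym2 V) : ℕ :=
  sSup (Set.range (loopsAt E))

/-- `κ_G`: the edge connectivity. -/
noncomputable def kappaG {V : Type*} {m : ℕ} (E : Fin m → Sym2 V) : ℕ :=
  sInf {k : ℕ | ∃ S : Finset (Fin m), S.card = k ∧ ∃ u v : V, ¬ ConnectedMod E S u v}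

/-!
Deleting all edge indices incident to a vertex `v` cuts `v` off from every loop, so
`m(G) ≤ d_I(v)` for every `v`. Every vertex with `d_I(v) ≠ m(G)` therefore contributes at least
`m(G) + 1` to `∑ d_I(v)`, and those with `d_I(v) ≥ m(G) + 2` at least `m(G) + 2`. Comparing with
the handshake identity `∑ d_I(v) + L_G = 2m` (a loop is incident to one vertex, any other edge to
two) gives the inequality.
-/

open Finset

section LoopCut

variable {V : Type*} {m : ℕ} (E : Fin m → Sym2 V)

lemma ConnectedMod.eq_iff_of_incident_subset {v : V} {S : Finset (Fin m)}
    (hS : ∀ e, v ∈ E e → e ∈ S) {a b : V} (h : ConnectedMod E S a b) : a = v ↔ b = v := by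
  induction h with
  | rel a b hab =>
    obtain ⟨e, he, hE⟩ := hab
    constructor
    · rintro rfl; exact absurd (hS e (hE ▸ Sym2.mem_mk_left _ _)) he
    · rintro rfl; exact absurd (hS e (hE ▸ Sym2.mem_mk_right _ _)) he
  | refl => exact Iff.rfl
  | symm _ _ _ ih => exact ih.symm
  | trans _ _ _ _ _ ih₁ ih₂ => exact ih₁.trans ih₂

lemma not_decodableMod_of_incident_subset {v : V} {S : Finset (Fin m)}
    (hS : ∀ e, v ∈ E e → e ∈ S) : ¬ DecodableMod E S := by
  intro hdec
  obtain ⟨w, ⟨e, he, hloop⟩, hconn⟩ := hdec v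
  obtain rfl : w = v := (ConnectedMod.eq_iff_of_incident_subset E hS hconn).mp rfl
  exact he (hS e (hloop ▸ Sym2.mem_mk_left _ _))

lemma dI_eq_card_filter [DecidableEq V] (v : V) : dI E v = #{e | v ∈ E e} := by
  rw [dI, Set.ncard_eq_toFinset_card', Set.toFinset_ofPred]

lemma mCut_le_dI (v : V) : mCut E ≤ dI E v := by
  classical
  rw [dI_eq_card_filter]
  exact Nat.sInf_le ⟨_, rfl, not_decodableMod_of_incident_subset E fun e he => by simpa using he⟩

end LoopCut

lemma Sym2.card_toFinset_add_ite_isDiag {α : Type*} [DecidableEq α] (z : Sym2 α) :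
    #z.toFinset + (if z.IsDiag then 1 else 0) = 2 := by
  rw [Sym2.card_toFinset]
  split_ifs <;> rfl

section Handshake

variable {V : Type*} [DecidableEq V] {m : ℕ} (E : Fin m → Sym2 V)

lemma LG_eq_card_filter_isDiag : LG E = #{e | (E e).IsDiag} := by
  classical
  rw [LG, Set.ncard_eq_toFinset_card', Set.toFinset_ofPred]
  congr! 2 with e
  rw [← Sym2.mem_diagSet, ← Sym2.range_diag]
  exact exists_congr fun _ => eq_comm

theorem sum_dI_add_LG [Fintype V] : ∑ v, dI E v + LG E = 2 * m := by
  have hdeg : ∑ v, dI E v = ∑ e, #(E e).toFinset := by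
    simp only [dI_eq_card_filter, card_filter]
    rw [sum_comm]
    refine sum_congr rfl fun e _ => ?_
    rw [← card_filter]
    congr 1
    ext
    simp
  rw [hdeg, LG_eq_card_filter_isDiag, card_filter, ← sum_add_distrib]
  simp [Sym2.card_toFinset_add_ite_isDiag, mul_comm]

end Handshake

lemma card_mul_succ_add_card_le_sum_add_card {ι : Type*} (s : Finset ι) (f : ι → ℕ) (μ : ℕ)
    (h : ∀ i ∈ s, μ ≤ f i) :
    #s * (μ + 1) + #{i ∈ s | μ + 2 ≤ f i} ≤ ∑ i ∈ s, f i + #{i ∈ s | f i = μ} := by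
  classical
  calc #s * (μ + 1) + #{i ∈ s | μ + 2 ≤ f i}
      = ∑ i ∈ s, (μ + 1 + if μ + 2 ≤ f i then 1 else 0) := by
        rw [sum_add_distrib, sum_const, smul_eq_mul, card_filter]
    _ ≤ ∑ i ∈ s, (f i + if f i = μ then 1 else 0) :=
        sum_le_sum fun i hi => by have := h i hi; split_ifs <;> omega
    _ = ∑ i ∈ s, f i + #{i ∈ s | f i = μ} := by rw [sum_add_distrib, card_filter]

theorem stmt18_general {V : Type*} [Fintype V] {m : ℕ} (E : Fin m → Sym2 V) :
    Set.ncard {v : V | dI E v = mCut E} + 2 * m ≥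
      LG E + Fintype.card V * mCut E + Fintype.card V +
        Set.ncard {v : V | mCut E + 2 ≤ dI E v} := by
  classical
  have hcount := card_mul_succ_add_card_le_sum_add_card univ (dI E) (mCut E)
    fun v _ => mCut_le_dI E v
  have hsum := sum_dI_add_LG E
  simp only [Set.ncard_eq_toFinset_card', Set.toFinset_ofPred, card_univ] at hcount ⊢
  linarith

theorem stmt18 {V : Type*} [Fintype V] [Nonempty V] {m : ℕ} (E : Fin m → Sym2 V)
    (hdec : IsDecodable E) :
    Set.ncard {v : V | dI E v = mCut E} + 2 * m ≥
      LG E + Fintype.card V * mCut E + Fintype.card V +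
        Set.ncard {v : V | mCut E + 2 ≤ dI E v} :=
  stmt18_general E
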